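/- Let N ≥ 2, α > 1, p > 0 and ξ = (αp)^{-1/α}. Let h be a positive C² function on (0,∞) satisfying h'' + ((N-1)/r)h' = (1/α)h^{-α} − p on (0,∞), with h not identically equal to ξ. Then the set {r > 0 : h'(r) = 0} of critical points of h has no accumulation point in (0,∞); consequently, when its elements are enumerated as an increasing sequence r_1 < r_2 < r_3 < ⋯, one has lim_{k→∞} r_k = ∞. -/

import Mathlib

open Set Filter
open Topology

noncomputable section
set_option maxHeartbeats 1000000



lemma xi_pow' {α p : ℝ} (hα : 1 < α) (hp : 0 < p) :
    ((α * p) ^ (-(1 / α)) : ℝ) ^ (-α) = α * p := by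
  rw [← Real.rpow_mul (by positivity), show (-(1/α)) * (-α) = 1 by field_simp, Real.rpow_one]

lemma rpow_lip {α c d : ℝ} (hα : 0 < α) (hc : 0 < c) {x y : ℝ}
    (hx : x ∈ Icc c d) (hy : y ∈ Icc c d) :
    |x ^ (-α) - y ^ (-α)| ≤ (α * c ^ (-α - 1)) * |x - y| := by
  have key := Convex.norm_image_sub_le_of_norm_hasDerivWithin_le
    (f := fun u : ℝ => u ^ (-α)) (f' := fun u : ℝ => (-α) * u ^ (-α - 1))
    (s := Icc c d) (C := α * c ^ (-α - 1))
    (fun u hu => (Real.hasDerivAt_rpow_const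
      (Or.inl (ne_of_gt (lt_of_lt_of_le hc hu.1)))).hasDerivWithinAt)
    (fun u hu => by
      have hu0 : 0 < u := lt_of_lt_of_le hc hu.1
      have h1 : u ^ (-α - 1) ≤ c ^ (-α - 1) :=
        Real.rpow_le_rpow_of_nonpos hc hu.1 (by linarith)
      have h2 : (0:ℝ) < u ^ (-α - 1) := Real.rpow_pos_of_pos hu0 _
      rw [Real.norm_eq_abs, abs_mul, abs_neg, abs_of_pos hα, abs_of_pos h2]
      exact mul_le_mul_of_nonneg_left h1 hα.le)
    (convex_Icc c d) hy hx
  simpa [Real.norm_eq_abs] using key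

lemma const_of_touch (N : ℕ) (hN : 2 ≤ N) (α p ξ : ℝ) (hα : 1 < α) (hp : 0 < p)
    (hξ : ξ = (α * p) ^ (-(1 / α)))
    (h : ℝ → ℝ)
    (hreg : ContDiffOn ℝ 2 h (Ioi 0))
    (hode : ∀ r ∈ Ioi (0 : ℝ),
      deriv (deriv h) r + ((N : ℝ) - 1) / r * deriv h r = 1 / α * h r ^ (-α) - p)
    (x : ℝ) (hx : 0 < x) (hhx : h x = ξ) (hdx : deriv h x = 0) :
    ∀ r ∈ Ioi (0:ℝ), h r = ξ := by
  have hα0 : (0:ℝ) < α := by linarith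
  have hξ0 : 0 < ξ := hξ ▸ Real.rpow_pos_of_pos (by positivity) _
  have hN1 : (0:ℝ) ≤ (N:ℝ) - 1 := by
    have : (2:ℝ) ≤ (N:ℝ) := by exact_mod_cast hN
    linarith
  have hdiffAt : ∀ r, 0 < r → DifferentiableAt ℝ h r := fun r hr =>
    ((hreg.differentiableOn (by norm_num)).differentiableAt (isOpen_Ioi.mem_nhds hr))
  have hd1 : ContDiffOn ℝ 1 (deriv h) (Ioi 0) :=
    hreg.deriv_of_isOpen isOpen_Ioi (by norm_num)
  have hdiffAt' : ∀ r, 0 < r → DifferentiableAt ℝ (deriv h) r := fun r hr =>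
    ((hd1.differentiableOn (by norm_num)).differentiableAt (isOpen_Ioi.mem_nhds hr))
  set S : Set ℝ := {r : ℝ | 0 < r ∧ h r = ξ ∧ deriv h r = 0} with hS
  have Sopen : IsOpen S := by
    rw [isOpen_iff_mem_nhds]
    rintro r₀ ⟨hr₀, hh₀, hd₀⟩
    have hcontAt : ContinuousAt h r₀ := (hdiffAt r₀ hr₀).continuousAt
    have hev : ∀ᶠ t in 𝓝 r₀, 0 < t ∧ ξ/2 < h t ∧ h t < 2*ξ := by
      have h1 : ∀ᶠ t in 𝓝 r₀, 0 < t := eventually_gt_nhds hr₀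
      have h2 : ∀ᶠ t in 𝓝 r₀, h t ∈ Ioo (ξ/2) (2*ξ) :=
        hcontAt.preimage_mem_nhds (Ioo_mem_nhds (by rw [hh₀]; linarith) (by rw [hh₀]; linarith))
      filter_upwards [h1, h2] with t ht1 ht2 using ⟨ht1, ht2.1, ht2.2⟩
    obtain ⟨ε, hε, hball⟩ := Metric.eventually_nhds_iff_ball.mp hev
    set δ := min (ε/2) (r₀/2) with hδdef
    have hδ : 0 < δ := lt_min (by linarith) (by linarith)
    have hδ1 : δ ≤ ε/2 := min_le_left _ _
    have hδ2 : δ ≤ r₀/2 := min_le_right _ _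
    set a := r₀ - δ with hadef
    set b := r₀ + δ with hbdef
    have ha : 0 < a := by simp only [hadef]; linarith
    have hr₀mem : r₀ ∈ Ioo a b := by
      constructor <;> simp only [hadef, hbdef] <;> linarith
    have hIooBall : ∀ t ∈ Ioo a b, t ∈ Metric.ball r₀ ε := by
      rintro t ⟨ht1, ht2⟩
      rw [Metric.mem_ball, Real.dist_eq, abs_lt]
      simp only [hadef, hbdef] at ht1 ht2
      constructor <;> linarith
    have hsub : ∀ t ∈ Ioo a b, 0 < t ∧ ξ/2 < h t ∧ h t < 2*ξ :=
      fun t ht => hball t (hIooBall t ht)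
    -- Lipschitz data
    set L : ℝ := α * (ξ/2) ^ (-α - 1) with hLdef
    have hL0 : 0 ≤ L := by
      have := Real.rpow_pos_of_pos (show (0:ℝ) < ξ/2 by linarith) (-α - 1)
      positivity
    set Kr : ℝ := 1 + 1/α * L + ((N:ℝ) - 1)/a with hKrdef
    have hq1 : (0:ℝ) ≤ 1/α * L := by positivity
    have hq2 : (0:ℝ) ≤ ((N:ℝ)-1)/a := div_nonneg hN1 ha.le
    have hKr0 : 0 ≤ Kr := by rw [hKrdef]; linarith
    have hKr1 : 1 ≤ Kr := by rw [hKrdef]; linarith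
    set v : ℝ → ℝ × ℝ → ℝ × ℝ :=
      fun t z => (z.2, 1/α * z.1 ^ (-α) - p - ((N:ℝ)-1)/t * z.2) with hvdef
    set s : ℝ → Set (ℝ × ℝ) :=
      fun t => if t ∈ Ioo a b then Icc (ξ/2) (2*ξ) ×ˢ (univ : Set ℝ) else ∅ with hsdef
    have hv : ∀ t, LipschitzOnWith (Real.toNNReal Kr) (v t) (s t) := by
      intro t
      by_cases htm : t ∈ Ioo a b
      · have hta : a < t := htm.1
        have ht0 : 0 < t := lt_trans ha hta
        simp only [hsdef, if_pos htm]
        rw [lipschitzOnWith_iff_dist_le_mul]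
        rintro z hz w hw
        rw [mem_prod] at hz hw
        rw [Real.coe_toNNReal _ hKr0, Prod.dist_eq, Prod.dist_eq]
        set M := max (dist z.1 w.1) (dist z.2 w.2) with hMdef
        have hd1' : dist z.1 w.1 ≤ M := le_max_left _ _
        have hd2' : dist z.2 w.2 ≤ M := le_max_right _ _
        have hdnn : (0:ℝ) ≤ M := le_trans dist_nonneg hd1'
        apply max_le
        · show dist (v t z).1 (v t w).1 ≤ Kr * M
          simp only [hvdef]
          have h1M : 1 * M ≤ Kr * M := mul_le_mul_of_nonneg_right hKr1 hdnn
          linarith [hd2', h1M]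
        · show dist (v t z).2 (v t w).2 ≤ Kr * M
          have hc0 : (0:ℝ) ≤ ((N:ℝ)-1)/t := div_nonneg hN1 ht0.le
          have hcb : ((N:ℝ)-1)/t ≤ ((N:ℝ)-1)/a := div_le_div_of_nonneg_left hN1 ha hta.le
          have hlip := rpow_lip hα0 (show (0:ℝ) < ξ/2 by linarith) hz.1 hw.1
          simp only [hvdef, Real.dist_eq]
          have e1 : (1/α * z.1^(-α) - p - ((N:ℝ)-1)/t * z.2)
              - (1/α * w.1^(-α) - p - ((N:ℝ)-1)/t * w.2)
              = 1/α * (z.1^(-α) - w.1^(-α)) + (-(((N:ℝ)-1)/t)) * (z.2 - w.2) := by ring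
          rw [e1]
          refine le_trans (abs_add_le _ _) ?_
          rw [abs_mul, abs_mul, abs_neg, abs_of_nonneg hc0,
            abs_of_nonneg (by positivity : (0:ℝ) ≤ 1/α)]
          have m1 : |z.1 - w.1| ≤ M := by rw [← Real.dist_eq]; exact hd1'
          have m2 : |z.2 - w.2| ≤ M := by rw [← Real.dist_eq]; exact hd2'
          have t1 : 1/α * |z.1^(-α) - w.1^(-α)| ≤ 1/α * (L * |z.1 - w.1|) :=
            mul_le_mul_of_nonneg_left hlip (by positivity)
          have t2 : L * |z.1 - w.1| ≤ L * M := mul_le_mul_of_nonneg_left m1 hL0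
          have t3 : ((N:ℝ)-1)/t * |z.2 - w.2| ≤ ((N:ℝ)-1)/a * M :=
            mul_le_mul hcb m2 (abs_nonneg _) hq2
          have hfin : (1/α * L + ((N:ℝ)-1)/a) * M ≤ Kr * M :=
            mul_le_mul_of_nonneg_right (by rw [hKrdef]; linarith) hdnn
          have t2' : 1/α * (L * |z.1 - w.1|) ≤ 1/α * (L * M) :=
            mul_le_mul_of_nonneg_left t2 (by positivity)
          have hring : 1/α * (L * M) + ((N:ℝ)-1)/a * M = (1/α * L + ((N:ℝ)-1)/a) * M := by ring
          linarith [t1, t2', t3, hfin, hring]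
      · simp only [hsdef, if_neg htm]
        exact lipschitzOnWith_empty _ _
    -- the two solutions
    set f : ℝ → ℝ × ℝ := fun t => (h t, deriv h t) with hfdef
    set g : ℝ → ℝ × ℝ := fun _ => ((ξ, 0) : ℝ × ℝ) with hgdef
    have hfmem : ∀ t ∈ Ioo a b, HasDerivAt f (v t (f t)) t ∧ f t ∈ s t := by
      intro t ht
      have htpos := (hsub t ht).1
      have H1 : HasDerivAt h (deriv h t) t := (hdiffAt t htpos).hasDerivAt
      have H2 : HasDerivAt (deriv h) (deriv (deriv h) t) t := (hdiffAt' t htpos).hasDerivAt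
      constructor
      · have hpair : HasDerivAt f (deriv h t, deriv (deriv h) t) t := H1.prodMk H2
        have hveq : v t (f t) = (deriv h t, deriv (deriv h) t) := by
          have hodet := hode t htpos
          simp only [hvdef, hfdef]
          refine Prod.ext rfl ?_
          simp only
          linarith
        rw [hveq]; exact hpair
      · simp only [hsdef, if_pos ht, hfdef]
        exact mem_prod.mpr ⟨⟨(hsub t ht).2.1.le, (hsub t ht).2.2.le⟩, mem_univ _⟩
    have hgmem : ∀ t ∈ Ioo a b, HasDerivAt g (v t (g t)) t ∧ g t ∈ s t := by
      intro t ht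
      constructor
      · have hzero : v t (g t) = 0 := by
          simp only [hvdef, hgdef]
          refine Prod.ext rfl ?_
          simp only
          rw [hξ, xi_pow' hα hp]
          field_simp
          simp
        rw [hzero]
        exact hasDerivAt_const t _
      · simp only [hsdef, if_pos ht, hgdef]
        exact mem_prod.mpr ⟨⟨by linarith, by linarith⟩, mem_univ _⟩
    have heq : f r₀ = g r₀ := by
      simp only [hfdef, hgdef]
      exact Prod.ext hh₀ hd₀
    have huniq := ODE_solution_unique_of_mem_Ioo (fun t _ => hv t) hr₀mem hfmem hgmem heq
    have hhval : ∀ t ∈ Ioo a b, h t = ξ := fun t ht => congrArg Prod.fst (huniq ht)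
    have hdval : ∀ t ∈ Ioo a b, deriv h t = 0 := by
      intro t ht
      have hev' : h =ᶠ[𝓝 t] fun _ => ξ := eventually_of_mem (isOpen_Ioo.mem_nhds ht) hhval
      rw [hev'.deriv_eq, deriv_const]
    refine mem_of_superset (isOpen_Ioo.mem_nhds hr₀mem) (fun t ht => ?_)
    exact ⟨(hsub t ht).1, hhval t ht, hdval t ht⟩
  -- connectedness argument
  have hSx : x ∈ S := ⟨hx, hhx, hdx⟩
  have hclos : closure S ∩ Ioi 0 ⊆ S := by
    rintro r ⟨hrc, hrpos⟩
    haveI hne : (𝓝[S] r).NeBot := mem_closure_iff_nhdsWithin_neBot.mp hrc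
    have hhr : h r = ξ := by
      have T1 : Tendsto h (𝓝[S] r) (𝓝 (h r)) :=
        ((hdiffAt r hrpos).continuousAt.continuousWithinAt (s := S))
      refine tendsto_nhds_unique T1 ?_
      refine Tendsto.congr' ?_ tendsto_const_nhds
      filter_upwards [self_mem_nhdsWithin] with y hy using (hy.2.1).symm
    have hdr : deriv h r = 0 := by
      have T1 : Tendsto (deriv h) (𝓝[S] r) (𝓝 (deriv h r)) :=
        ((hdiffAt' r hrpos).continuousAt.continuousWithinAt (s := S))
      refine tendsto_nhds_unique T1 ?_
      refine Tendsto.congr' ?_ tendsto_const_nhds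
      filter_upwards [self_mem_nhdsWithin] with y hy using (hy.2.2).symm
    exact ⟨hrpos, hhr, hdr⟩
  have hsubset : Ioi (0:ℝ) ⊆ S :=
    isPreconnected_Ioi.subset_of_closure_inter_subset Sopen ⟨x, hx, hSx⟩ hclos
  exact fun r hr => (hsubset hr).2.1

lemma eq_xi_of_pow {α p u : ℝ} (hα : 1 < α) (hp : 0 < p) (hu : 0 < u)
    (hpow : u ^ (-α) = α * p) : u = (α * p) ^ (-(1 / α)) := by
  rw [← hpow, ← Real.rpow_mul hu.le, show (-α) * (-(1/α)) = 1 by field_simp, Real.rpow_one]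


/-- For a nontrivial positive global `C²` solution of
`h'' + ((N-1)/r) h' = (1/α) h^(-α) - p` on `(0,∞)` (not identically the constant
`ξ = (αp)^(-1/α)`), the set of critical points `{r > 0 : h'(r) = 0}` has no accumulation
point in `(0,∞)`; consequently any strictly increasing enumeration of critical points
tends to infinity. -/
theorem critical_points_tend_to_infinity
    (N : ℕ) (hN : 2 ≤ N) (α p : ℝ) (hα : 1 < α) (hp : 0 < p)
    (ξ : ℝ) (hξ : ξ = (α * p) ^ (-(1 / α)))
    (h : ℝ → ℝ)
    (hpos : ∀ r ∈ Ioi (0 : ℝ), 0 < h r)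
    (hreg : ContDiffOn ℝ 2 h (Ioi 0))
    (hode : ∀ r ∈ Ioi (0 : ℝ),
      deriv (deriv h) r + ((N : ℝ) - 1) / r * deriv h r = 1 / α * h r ^ (-α) - p)
    (hnontriv : ¬ ∀ r ∈ Ioi (0 : ℝ), h r = ξ) :
    (∀ x ∈ Ioi (0 : ℝ), ¬ AccPt x (Filter.principal {r : ℝ | 0 < r ∧ deriv h r = 0})) ∧
    (∀ rk : ℕ → ℝ, StrictMono rk →
      (∀ k, rk k ∈ {r : ℝ | 0 < r ∧ deriv h r = 0}) →
      Tendsto rk atTop atTop) := by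
  have hα0 : (0:ℝ) < α := by linarith
  have hdiffAt : ∀ r, 0 < r → DifferentiableAt ℝ h r := fun r hr =>
    ((hreg.differentiableOn (by norm_num)).differentiableAt (isOpen_Ioi.mem_nhds hr))
  have hd1 : ContDiffOn ℝ 1 (deriv h) (Ioi 0) :=
    hreg.deriv_of_isOpen isOpen_Ioi (by norm_num)
  have hdiffAt' : ∀ r, 0 < r → DifferentiableAt ℝ (deriv h) r := fun r hr =>
    ((hd1.differentiableOn (by norm_num)).differentiableAt (isOpen_Ioi.mem_nhds hr))
  set Z : Set ℝ := {r : ℝ | 0 < r ∧ deriv h r = 0} with hZdef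
  have key : ∀ x ∈ Ioi (0:ℝ), ¬ AccPt x (𝓟 Z) := by
    intro x hx hacc
    have hx0 : 0 < x := hx
    haveI hF : (𝓝[≠] x ⊓ 𝓟 Z).NeBot := hacc
    set F := 𝓝[≠] x ⊓ 𝓟 Z with hFdef
    have hZF : ∀ᶠ z in F, z ∈ Z := (inf_le_right : F ≤ 𝓟 Z) (mem_principal_self Z)
    have hdx : deriv h x = 0 := by
      have T1 : Tendsto (deriv h) F (𝓝 (deriv h x)) :=
        ((hdiffAt' x hx0).continuousAt.tendsto).mono_left
          (le_trans inf_le_left nhdsWithin_le_nhds)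
      have T2 : Tendsto (deriv h) F (𝓝 0) := by
        refine Tendsto.congr' ?_ tendsto_const_nhds
        filter_upwards [hZF] with z hz using hz.2.symm
      exact tendsto_nhds_unique T1 T2
    have hddx : deriv (deriv h) x = 0 := by
      have HD : HasDerivAt (deriv h) (deriv (deriv h) x) x := (hdiffAt' x hx0).hasDerivAt
      have T1 : Tendsto (slope (deriv h) x) F (𝓝 (deriv (deriv h) x)) :=
        (hasDerivAt_iff_tendsto_slope.mp HD).mono_left inf_le_left
      have T2 : Tendsto (slope (deriv h) x) F (𝓝 0) := by
        refine Tendsto.congr' ?_ tendsto_const_nhds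
        filter_upwards [hZF] with z hz
        simp [slope, hz.2, hdx]
      exact tendsto_nhds_unique T1 T2
    have hodex := hode x hx
    rw [hdx, hddx] at hodex
    have hpow : h x ^ (-α) = α * p := by
      have h1 : 1/α * h x ^ (-α) = p := by linarith
      field_simp at h1
      linarith
    have hhx : h x = ξ := by rw [hξ]; exact eq_xi_of_pow hα hp (hpos x hx) hpow
    exact hnontriv (const_of_touch N hN α p ξ hα hp hξ h hreg hode x hx0 hhx hdx)
  refine ⟨key, ?_⟩
  intro rk hmono hmem
  rcases tendsto_of_monotone hmono.monotone with hT | ⟨l, hl⟩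
  · exact hT
  · exfalso
    have hle : ∀ k, rk k ≤ l := fun k => hmono.monotone.ge_of_tendsto hl k
    have hlt : ∀ k, rk k < l := fun k =>
      lt_of_lt_of_le (hmono (Nat.lt_succ_self k)) (hle (k+1))
    have hl0 : 0 < l := lt_of_lt_of_le (hmem 0).1 (hle 0)
    have hT' : Tendsto rk atTop (𝓝[≠] l ⊓ 𝓟 Z) := by
      rw [tendsto_inf]
      constructor
      · rw [tendsto_nhdsWithin_iff]
        exact ⟨hl, Eventually.of_forall fun k => (hlt k).ne⟩
      · exact tendsto_principal.mpr (Eventually.of_forall hmem)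
    exact key l hl0 hT'.neBot
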